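/- arXiv:0904.2936 — 2 statements merged into one kernel-verified Lean document; each statement's English description precedes it below -/
import Mathlib

section
/- Let r_1,...,r_s be positive real numbers, m a positive integer, and N a positive integer. Suppose (a_i)_{i∈I} is a family of real numbers of the form a_i = (1/m)·Σ_{j=1}^s r_j n_{i,j} where each n_{i,j} is an integer with n_{i,j} ≥ -N, and suppose each a_i < 0. Also suppose r'_1,...,r'_t are positive reals, m' a positive integer, and b_i = (1/m')·Σ_{k=1}^t r'_k n'_{i,k} with n'_{i,k} nonnegative integers, and set μ_i = -a_i/(b_i - a_i) (assuming b_i - a_i > 0, equivalently μ_i ∈ (0,1]). Then sup_{i∈I} μ_i is attained: there exists l ∈ I with μ_l = sup_i μ_i. -/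
/-!
Fix `i₀`; only the indices with `μ i₀ ≤ μ i` matter. Integer vectors bounded below whose
weighted sum with positive weights is bounded above form a finite set. Since `a i < 0`, this
makes `a` take finitely many values, so `-a` is bounded; on the indices that matter this bounds
`b`, which therefore also takes finitely many values there. Hence `μ`, a function of `(a, b)`,
takes finitely many values on those indices, and one of them is the maximum.
-/

open Finset

lemma finite_setOf_sum_mul_le {ι : Type*} [Fintype ι] {r : ι → ℝ} (hr : ∀ j, 0 < r j)
    (L : ℤ) (C : ℝ) : {z : ι → ℤ | (∀ j, L ≤ z j) ∧ ∑ j, r j * z j ≤ C}.Finite := by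
  classical
  refine (Set.finite_Icc (fun _ => L) fun j => ⌈L + (C - L * ∑ j, r j) / r j⌉).subset ?_
  rintro z ⟨hL, hC⟩
  refine ⟨hL, fun j => ?_⟩
  have hj : r j * (z j - L) ≤ C - L * ∑ j, r j := calc
    r j * (z j - L) ≤ ∑ j', r j' * (z j' - L) :=
      single_le_sum (f := fun j' => r j' * ((z j' : ℝ) - L))
        (fun j' _ => mul_nonneg (hr j').le (sub_nonneg.2 (by exact_mod_cast hL j'))) (mem_univ j)
    _ = ∑ j', r j' * z j' - L * ∑ j', r j' := by
      rw [mul_sum]; simp only [mul_sub, sum_sub_distrib, mul_comm]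
    _ ≤ C - L * ∑ j, r j := by linarith
  have hzj : (z j : ℝ) ≤ L + (C - L * ∑ j, r j) / r j := by
    rw [← sub_le_iff_le_add', le_div_iff₀ (hr j)]
    linarith
  exact_mod_cast hzj.trans (Int.le_ceil _)

lemma finite_image_of_eq_mul_sum {I ι : Type*} [Fintype ι] {r : ι → ℝ} (hr : ∀ j, 0 < r j)
    {L : ℤ} {C c : ℝ} {S : Set I} {z : I → ι → ℤ} {f : I → ℝ}
    (hf : ∀ i, f i = c * ∑ j, r j * z i j) (hL : ∀ i j, L ≤ z i j)
    (hC : ∀ i ∈ S, ∑ j, r j * z i j ≤ C) : (f '' S).Finite :=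
  ((finite_setOf_sum_mul_le hr L C).image fun w => c * ∑ j, r j * w j).subset <| by
    rintro _ ⟨i, hi, rfl⟩
    exact ⟨z i, ⟨hL i, hC i hi⟩, (hf i).symm⟩

lemma exists_forall_le_of_finite_image_superlevel {I α : Type*} [LinearOrder α] {f : I → α}
    (i₀ : I) (hf : (f '' {i | f i₀ ≤ f i}).Finite) : ∃ l, ∀ i, f i ≤ f l := by
  obtain ⟨_, ⟨l, -, rfl⟩, hmax⟩ :=
    Set.exists_max_image _ id hf ⟨_, i₀, le_refl (f i₀), rfl⟩
  refine ⟨l, fun i => ?_⟩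
  rcases le_total (f i₀) (f i) with h | h
  · exact hmax _ ⟨i, h, rfl⟩
  · exact h.trans (hmax _ ⟨i₀, le_refl (f i₀), rfl⟩)

lemma le_neg_div_of_le_neg_div_sub {a b c : ℝ} (ha : a < 0) (hba : 0 < b - a) (hc : 0 < c)
    (h : c ≤ -a / (b - a)) : b ≤ -a / c := by
  rw [le_div_iff₀ hba] at h
  rw [le_div_iff₀ hc]
  nlinarith

theorem stmt_0_general {I : Type*} [Nonempty I] (s t : ℕ) (r : Fin s → ℝ) (r' : Fin t → ℝ)
    (hr : ∀ j, 0 < r j) (hr' : ∀ k, 0 < r' k)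
    (m m' N : ℕ) (hm' : 0 < m')
    (n : I → Fin s → ℤ) (hn : ∀ i j, -(N : ℤ) ≤ n i j)
    (n' : I → Fin t → ℤ) (hn' : ∀ i k, 0 ≤ n' i k)
    (a b : I → ℝ)
    (ha : ∀ i, a i = (1 / (m : ℝ)) * ∑ j, r j * (n i j : ℝ))
    (hb : ∀ i, b i = (1 / (m' : ℝ)) * ∑ k, r' k * (n' i k : ℝ))
    (haneg : ∀ i, a i < 0)
    (hpos : ∀ i, 0 < b i - a i)
    (μ : I → ℝ) (hμ : ∀ i, μ i = -a i / (b i - a i)) :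
    ∃ l, ∀ i, μ i ≤ μ l := by
  obtain ⟨i₀⟩ := ‹Nonempty I›
  have ha_fin : (a '' Set.univ).Finite := finite_image_of_eq_mul_sum hr ha hn fun i _ => by
    by_contra! h
    exact (haneg i).not_ge (ha i ▸ mul_nonneg (by positivity) h.le)
  obtain ⟨A, hA⟩ := ha_fin.bddBelow
  set T := {i | μ i₀ ≤ μ i}
  have hμ₀ : 0 < μ i₀ := hμ i₀ ▸ div_pos (neg_pos.2 (haneg i₀)) (hpos i₀)
  have hb_fin : (b '' T).Finite := finite_image_of_eq_mul_sum hr' hb hn' fun i hi => by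
    have hbi : b i ≤ -A / μ i₀ := (le_neg_div_of_le_neg_div_sub (haneg i) (hpos i) hμ₀
      (hμ i ▸ hi)).trans (div_le_div_of_nonneg_right (by linarith [hA ⟨i, trivial, rfl⟩]) hμ₀.le)
    rw [hb i, one_div, inv_mul_le_iff₀ (by exact_mod_cast hm')] at hbi
    exact hbi
  refine exists_forall_le_of_finite_image_superlevel i₀
    (((ha_fin.prod hb_fin).image fun p => -p.1 / (p.2 - p.1)).subset ?_)
  rintro _ ⟨i, hi, rfl⟩
  exact ⟨(a i, b i), ⟨⟨i, trivial, rfl⟩, ⟨i, hi, rfl⟩⟩, (hμ i).symm⟩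

/-- Arithmetic core of Lemma 2.2: the supremum of the numbers
`μ i = -a i / (b i - a i)` is attained. -/
theorem stmt_0 {I : Type*} [Nonempty I] (s t : ℕ) (r : Fin s → ℝ) (r' : Fin t → ℝ)
    (hr : ∀ j, 0 < r j) (hr' : ∀ k, 0 < r' k)
    (m m' N : ℕ) (hm : 0 < m) (hm' : 0 < m') (hN : 0 < N)
    (n : I → Fin s → ℤ) (hn : ∀ i j, -(N : ℤ) ≤ n i j)
    (n' : I → Fin t → ℤ) (hn' : ∀ i k, 0 ≤ n' i k)
    (a b : I → ℝ)
    (ha : ∀ i, a i = (1 / (m : ℝ)) * ∑ j, r j * (n i j : ℝ))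
    (hb : ∀ i, b i = (1 / (m' : ℝ)) * ∑ k, r' k * (n' i k : ℝ))
    (haneg : ∀ i, a i < 0)
    (hpos : ∀ i, 0 < b i - a i)
    (μ : I → ℝ) (hμ : ∀ i, μ i = -a i / (b i - a i)) :
    ∃ l, ∀ i, μ i ≤ μ l :=
  stmt_0_general s t r r' hr hr' m m' N hm' n hn n' hn' a b ha hb haneg hpos μ hμ
end

section
/- Let B = Σ_i b_i D_i and M = Σ_i m_i D_i be finitely supported real-valued functions on a set of indices (prime divisors), with 0 ≤ b_i ≤ 1 and m_i ≥ 0. Define α := min{ t > 0 : ⌊(B + tM)^{≤1}⌋ ≠ ⌊B⌋ }, where D^{≤1} replaces each coefficient d_i by min(d_i, 1) and ⌊·⌋ is the coordinatewise floor. Assume some index has m_i > 0 and b_i < 1 (so that θ(B,M) := #{i : m_i ≠ 0 and b_i ≠ 1} > 0). Then: (a) α is well-defined and equals min over {i : m_i > 0, b_i < 1} of (1 - b_i)/m_i; (b) writing (B + αM)^{≤1} = B + C, the function C ≥ 0 is supported in Supp M; (c) αM = C + M' where M' ≥ 0 is supported in Supp ⌊B + C⌋; and (d) θ(B+C, M+C)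 < θ(B, M). -/
/-!
For `0 ≤ b ≤ 1` the round-down of `min (b + t m) 1` can only move from `⌊b⌋ = 0` to `1`, and it
does so exactly when `b < 1 ≤ b + t m`; hence the first jump happens at
`α = min {(1 - bᵢ) / mᵢ : mᵢ > 0, bᵢ < 1}`. The correction `C = (B + αM)^{≤1} - B` lifts each
coefficient at most up to `1`, so it vanishes where `M` vanishes and where `B` is already `1`,
and it is no larger than `αM`, with equality unless the coefficient reaches `1`. At an index `i₀`
realising the minimum it lifts `b_{i₀}` to exactly `1`: the index `i₀` leaves the set counted by
`θ` and no index enters it.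
-/

noncomputable def theta {ι : Type*} (b m : ι → ℝ) : ℕ :=
  Set.ncard {i | m i ≠ 0 ∧ b i ≠ 1}

theorem theta_add_lt {ι : Type*} [Finite ι] {b m c : ι → ℝ}
    (hcm : ∀ i, m i = 0 → c i = 0) (hcb : ∀ i, b i = 1 → c i = 0)
    {i₀ : ι} (hm₀ : m i₀ ≠ 0) (hb₀ : b i₀ ≠ 1) (hbc₀ : b i₀ + c i₀ = 1) :
    theta (b + c) (m + c) < theta b m := by
  refine Set.ncard_lt_ncard ⟨fun i ⟨hmc, hbc⟩ => ⟨fun h => hmc ?_, fun h => hbc ?_⟩,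
    fun h => (h ⟨hm₀, hb₀⟩).2 hbc₀⟩ (Set.toFinite _)
  · simp [h, hcm i h]
  · simp [h, hcb i h]

section Truncation

variable {b x : ℝ}

theorem floor_min_add_one_ne_floor_iff (hb₀ : 0 ≤ b) (hb₁ : b ≤ 1) (hx : 0 ≤ x) :
    ⌊min (b + x) 1⌋ ≠ ⌊b⌋ ↔ b < 1 ∧ 1 ≤ b + x := by
  rcases hb₁.lt_or_eq with hb | rfl
  · rw [Int.floor_eq_zero_iff.2 ⟨hb₀, hb⟩]
    by_cases h : 1 ≤ b + x
    · simp [hb, h]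
    · have hlt : b + x < 1 := not_le.1 h
      simp [min_eq_left hlt.le, Int.floor_eq_zero_iff, hlt, h, add_nonneg hb₀ hx]
  · simp [hx]

theorem min_add_one_sub_nonneg (hb : b ≤ 1) (hx : 0 ≤ x) : 0 ≤ min (b + x) 1 - b :=
  sub_nonneg.2 (le_min (le_add_of_nonneg_right hx) hb)

theorem min_add_one_sub_le (b x : ℝ) : min (b + x) 1 - b ≤ x :=
  sub_le_iff_le_add'.2 (min_le_left _ _)

theorem min_add_one_sub_eq_zero_of_eq_zero (hb : b ≤ 1) (hx : x = 0) : min (b + x) 1 - b = 0 := by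
  simp [hx, hb]

theorem min_add_one_sub_eq_zero_of_eq_one (hb : b = 1) (hx : 0 ≤ x) : min (b + x) 1 - b = 0 := by
  simp [hb, hx]

theorem add_min_add_one_sub_eq_one_of_ne (h : min (b + x) 1 - b ≠ x) :
    b + (min (b + x) 1 - b) = 1 := by
  rcases min_cases (b + x) 1 with ⟨heq, _⟩ | ⟨heq, _⟩
  · exact absurd (by rw [heq]; ring) h
  · rw [heq]; ring

end Truncation

theorem isLeast_floor_jump {ι : Type*} {b m : ι → ℝ} (hb₀ : ∀ i, 0 ≤ b i) (hb₁ : ∀ i, b i ≤ 1)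
    (hm : ∀ i, 0 ≤ m i) {i₀ : ι} (hm₀ : 0 < m i₀) (hbi₀ : b i₀ < 1)
    (hmin : ∀ i, 0 < m i → b i < 1 → (1 - b i₀) / m i₀ ≤ (1 - b i) / m i) :
    IsLeast {t : ℝ | 0 < t ∧ ∃ i, ⌊min (b i + t * m i) 1⌋ ≠ ⌊b i⌋} ((1 - b i₀) / m i₀) := by
  have hpos : 0 < (1 - b i₀) / m i₀ := div_pos (sub_pos.2 hbi₀) hm₀
  refine ⟨⟨hpos, i₀, ?_⟩, ?_⟩
  · rw [floor_min_add_one_ne_floor_iff (hb₀ i₀) (hb₁ i₀) (mul_nonneg hpos.le (hm i₀)),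
      div_mul_cancel₀ _ hm₀.ne']
    exact ⟨hbi₀, by linarith⟩
  · rintro t ⟨ht, i, hi⟩
    obtain ⟨hbi, hreach⟩ :=
      (floor_min_add_one_ne_floor_iff (hb₀ i) (hb₁ i) (mul_nonneg ht.le (hm i))).1 hi
    have hmi : 0 < m i := pos_of_mul_pos_right (by linarith) ht.le
    exact (hmin i hmi hbi).trans ((div_le_iff₀ hmi).2 (by linarith))

/-- Combinatorial content of Step 2 of the proof of Theorem 1.4: the jumping
threshold `α` of the round-down of `(B + tM)^{≤1}`, the properties of
`C = (B + αM)^{≤1} - B`, and the strict decrease of the invariant `θ`. -/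
theorem stmt_7 {ι : Type*} [Fintype ι] (b m : ι → ℝ)
    (hb0 : ∀ i, 0 ≤ b i) (hb1 : ∀ i, b i ≤ 1) (hm : ∀ i, 0 ≤ m i)
    (hθ : ∃ i, 0 < m i ∧ b i < 1) :
    ∃ i₀, 0 < m i₀ ∧ b i₀ < 1 ∧
      let α : ℝ := (1 - b i₀) / m i₀
      let c : ι → ℝ := fun i => min (b i + α * m i) 1 - b i
      -- (a) α is the least t > 0 at which the round-down jumps, and it is the
      -- minimum of the quotients (1 - b i)/(m i)
      IsLeast {t : ℝ | 0 < t ∧ ∃ i, ⌊min (b i + t * m i) 1⌋ ≠ ⌊b i⌋} α ∧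
      (∀ i, 0 < m i → b i < 1 → α ≤ (1 - b i) / m i) ∧
      -- (b) C ≥ 0 is supported in Supp M
      (∀ i, 0 ≤ c i ∧ (c i ≠ 0 → m i ≠ 0)) ∧
      -- (c) αM = C + M' with M' ≥ 0 supported in Supp ⌊B + C⌋
      (∀ i, 0 ≤ α * m i - c i ∧ (α * m i - c i ≠ 0 → b i + c i = 1)) ∧
      -- (d) θ strictly decreases
      Set.ncard {i | m i + c i ≠ 0 ∧ b i + c i ≠ 1} <
        Set.ncard {i | m i ≠ 0 ∧ b i ≠ 1} := by
  obtain ⟨i₀, ⟨hm₀, hb₀⟩, hmin⟩ := Set.exists_min_image {i | 0 < m i ∧ b i < 1}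
    (fun i => (1 - b i) / m i) (Set.toFinite _) hθ
  have hα_le : ∀ i, 0 < m i → b i < 1 → (1 - b i₀) / m i₀ ≤ (1 - b i) / m i :=
    fun i hmi hbi => hmin i ⟨hmi, hbi⟩
  refine ⟨i₀, hm₀, hb₀, ?_⟩
  intro α c
  have hαm : ∀ i, 0 ≤ α * m i := fun i => mul_nonneg (div_pos (sub_pos.2 hb₀) hm₀).le (hm i)
  have hcm : ∀ i, m i = 0 → c i = 0 := fun i h =>
    min_add_one_sub_eq_zero_of_eq_zero (hb1 i) (by simp [h])
  have hcb : ∀ i, b i = 1 → c i = 0 := fun i h => min_add_one_sub_eq_zero_of_eq_one h (hαm i)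
  have hbc₀ : b i₀ + c i₀ = 1 := by
    show b i₀ + (min (b i₀ + α * m i₀) 1 - b i₀) = 1
    rw [div_mul_cancel₀ _ hm₀.ne']
    simp
  exact ⟨isLeast_floor_jump hb0 hb1 hm hm₀ hb₀ hα_le, hα_le,
    fun i => ⟨min_add_one_sub_nonneg (hb1 i) (hαm i), mt (hcm i)⟩,
    fun i => ⟨sub_nonneg.2 (min_add_one_sub_le _ _),
      fun h => add_min_add_one_sub_eq_one_of_ne (sub_ne_zero.1 h).symm⟩,
    theta_add_lt hcm hcb hm₀.ne' hb₀.ne hbc₀⟩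
end
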